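/- Let δ ∈ ℝ∪{∞}. On 𝒱(•,δ), the subspace topology induced by the Zariski topology of Zar(K(X)|V), the subspace topology induced by the constructible topology, and the metric topology induced by d_δ all coincide. -/

import Mathlib

/-!
The constructible topology is always finer than the Zariski one, so it suffices to show that
every `d_δ`-ball is Zariski open and that every `B(φ)` is `d_δ`-open and closed.

Since `d_δ` is an ultrametric, a ball is Zariski open as soon as the ball of each radius around
each `V_E` contains a Zariski neighbourhood of `V_E`; here `B(ψ)` with
`ψ = (X - s_M)/(s_{M+1} - s_M)` lies in the ball of radius `e^{-γ_M} - e^{-δ}`.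

That `B(φ)` is clopen means that `[φ ∈ V_E]` is locally constant. Extend `v` to a splitting
field of the numerator and denominator of `φ`. For `t` close to `s`, a root at eventually
constant distance `λ` from `s_n` stays at distance `λ` from `t_n`, while the pseudo-limits of `s`
(which are `δ`-close to each other) all have one common distance `g_n ∈ (ρ, δ)` to `t_n`. Hence
`v(φ(t_n))` is eventually `d + m g_n` with `d, m` depending only on `s`, and the sign of `d + m μ`
is constant for `μ < δ` close enough to `δ`.
-/

open Filter Topology TopologicalSpace Set Polynomial

noncomputable section

namespace PaperPCZar

variable {K : Type*} [Field K]

/-- `expNeg γ = e^{-γ}` for `γ ∈ ℝ ∪ {∞}`, with `e^{-∞} = 0`. -/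
def expNeg (γ : WithTop ℝ) : ℝ := WithTop.recTopCoe 0 (fun r => Real.exp (-r)) γ

/-- `v` is a rank-one (i.e. nontrivial, real-valued) valuation. -/
def IsRankOne (v : AddValuation K (WithTop ℝ)) : Prop := ∃ x : K, v x ≠ 0 ∧ v x ≠ ⊤

/-- The value group `Γ_v` of `v`, as a subset of `ℝ`. -/
def valueGroup (v : AddValuation K (WithTop ℝ)) : Set ℝ := {r : ℝ | ∃ x : K, v x = (r : WithTop ℝ)}

/-- `ℚΓ_v = {q·γ : q ∈ ℚ, γ ∈ Γ_v}`, the divisible hull of the value group inside `ℝ`. -/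
def QGamma (v : AddValuation K (WithTop ℝ)) : Set ℝ :=
  {r : ℝ | ∃ (q : ℚ) (γ : ℝ), γ ∈ valueGroup v ∧ r = q * γ}

/-- Order convergence of a sequence in `ℝ ∪ {∞}` to `γ`. -/
def OrdLim (f : ℕ → WithTop ℝ) (γ : WithTop ℝ) : Prop :=
  (∀ a : WithTop ℝ, a < γ → ∀ᶠ n in atTop, a < f n) ∧
  (∀ b : WithTop ℝ, γ < b → ∀ᶠ n in atTop, f n < b)

/-- `s` is a pseudo-convergent sequence with respect to `v`. -/
def IsPC (v : AddValuation K (WithTop ℝ)) (s : ℕ → K) : Prop :=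
  ∀ n, v (s (n + 1) - s n) < v (s (n + 2) - s (n + 1))

/-- `s` is a pseudo-divergent sequence with respect to `v`. -/
def IsPD (v : AddValuation K (WithTop ℝ)) (s : ℕ → K) : Prop :=
  ∀ n, v (s (n + 1) - s (n + 2)) < v (s n - s (n + 1))

/-- `s` is a pseudo-stationary sequence with respect to `v`. -/
def IsPS (v : AddValuation K (WithTop ℝ)) (s : ℕ → K) : Prop :=
  ∀ n m n' m' : ℕ, n ≠ m → n' ≠ m' → v (s n - s m) = v (s n' - s m')

/-- `δ ∈ ℝ ∪ {∞}` is the breadth of the sequence `s`, i.e. `δ = lim_n v(s_{n+1} - s_n)`. -/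
def IsBreadth (v : AddValuation K (WithTop ℝ)) (s : ℕ → K) (δ : WithTop ℝ) : Prop :=
  OrdLim (fun n => v (s (n + 1) - s n)) δ

/-- `α ∈ K` is a pseudo-limit of the pseudo-convergent sequence `s`. -/
def IsPCLimit (v : AddValuation K (WithTop ℝ)) (s : ℕ → K) (α : K) : Prop :=
  ∀ n, v (α - s n) < v (α - s (n + 1))

/-- `α ∈ K` is a pseudo-limit of the pseudo-divergent sequence `s`. -/
def IsPDLimit (v : AddValuation K (WithTop ℝ)) (s : ℕ → K) (α : K) : Prop :=
  ∀ n, v (α - s (n + 1)) < v (α - s n)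

/-- `β ∈ K̄` is a pseudo-limit of `s ⊆ K` with respect to an extension `u` of `v`
to the algebraic closure of `K`. -/
def IsPCLimitAC (u : AddValuation (AlgebraicClosure K) (WithTop ℝ)) (s : ℕ → K)
    (β : AlgebraicClosure K) : Prop :=
  ∀ n, u (β - algebraMap K (AlgebraicClosure K) (s n)) <
    u (β - algebraMap K (AlgebraicClosure K) (s (n + 1)))

/-- `s` is of transcendental type: for every polynomial `f`, `v(f(s_n))` eventually
stabilizes. -/
def IsTranscendentalType (v : AddValuation K (WithTop ℝ)) (s : ℕ → K) : Prop :=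
  ∀ f : Polynomial K, ∃ N, ∀ n ≥ N, v (f.eval (s n)) = v (f.eval (s N))

/-- The ultrametric distance `d(x,y) = e^{-v(x-y)}` on `K`. -/
def dK (v : AddValuation K (WithTop ℝ)) (x y : K) : ℝ := expNeg (v (x - y))

/-- The set `V_E = {φ ∈ K(X) : φ(s_n) ∈ V for all but finitely many n}`. -/
def VESet (v : AddValuation K (WithTop ℝ)) (s : ℕ → K) : Set (RatFunc K) :=
  {φ : RatFunc K | ∀ᶠ n in atTop, 0 ≤ v (RatFunc.eval (RingHom.id K) (s n) φ)}

/-- `Zar(K(X)|V)`: the valuation subrings of `K(X)` containing (the image of) `V`. -/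
def ZarSet (v : AddValuation K (WithTop ℝ)) : Set (ValuationSubring (RatFunc K)) :=
  {W | ∀ x : K, 0 ≤ v x → algebraMap K (RatFunc K) x ∈ W}

/-- `𝒱`: valuation subrings of `K(X)` of the form `V_E`, `E` pseudo-convergent. -/
def VV (v : AddValuation K (WithTop ℝ)) : Set (ValuationSubring (RatFunc K)) :=
  {W | ∃ s : ℕ → K, IsPC v s ∧ (W : Set (RatFunc K)) = VESet v s}

/-- `𝒱(•,δ)`: those `V_E` with `E` pseudo-convergent of breadth `δ`. -/
def VVδ (v : AddValuation K (WithTop ℝ)) (δ : WithTop ℝ) : Set (ValuationSubring (RatFunc K)) :=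
  {W | ∃ s : ℕ → K, IsPC v s ∧ IsBreadth v s δ ∧ (W : Set (RatFunc K)) = VESet v s}

/-- `𝒱_K(•,δ)`: those `V_E` with `E` pseudo-convergent of breadth `δ` having a
pseudo-limit in `K`. -/
def VVKδ (v : AddValuation K (WithTop ℝ)) (δ : WithTop ℝ) : Set (ValuationSubring (RatFunc K)) :=
  {W | ∃ s : ℕ → K, IsPC v s ∧ IsBreadth v s δ ∧ (∃ α : K, IsPCLimit v s α) ∧
    (W : Set (RatFunc K)) = VESet v s}

/-- `𝒱(β,•)`: those `V_E` with `E` pseudo-convergent having `β ∈ K̄` as a pseudo-limit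
with respect to `u`. -/
def VVβ (v : AddValuation K (WithTop ℝ)) (u : AddValuation (AlgebraicClosure K) (WithTop ℝ))
    (β : AlgebraicClosure K) : Set (ValuationSubring (RatFunc K)) :=
  {W | ∃ s : ℕ → K, IsPC v s ∧ IsPCLimitAC u s β ∧ (W : Set (RatFunc K)) = VESet v s}

/-- `𝒱(β,•)` for a pseudo-limit `β ∈ K`. -/
def VVβK (v : AddValuation K (WithTop ℝ)) (β : K) : Set (ValuationSubring (RatFunc K)) :=
  {W | ∃ s : ℕ → K, IsPC v s ∧ IsPCLimit v s β ∧ (W : Set (RatFunc K)) = VESet v s}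

/-- `𝒱_div`: those `V_E` with `E` pseudo-divergent. -/
def VVdiv (v : AddValuation K (WithTop ℝ)) : Set (ValuationSubring (RatFunc K)) :=
  {W | ∃ s : ℕ → K, IsPD v s ∧ (W : Set (RatFunc K)) = VESet v s}

/-- `𝒱_div(•,δ)`: those `V_E` with `E` pseudo-divergent of breadth `δ`. -/
def VVdivδ (v : AddValuation K (WithTop ℝ)) (δ : WithTop ℝ) : Set (ValuationSubring (RatFunc K)) :=
  {W | ∃ s : ℕ → K, IsPD v s ∧ IsBreadth v s δ ∧ (W : Set (RatFunc K)) = VESet v s}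

/-- `𝒱_div(β,•)`: those `V_E` with `E` pseudo-divergent having `β ∈ K` as a pseudo-limit. -/
def VVdivβ (v : AddValuation K (WithTop ℝ)) (β : K) : Set (ValuationSubring (RatFunc K)) :=
  {W | ∃ s : ℕ → K, IsPD v s ∧ IsPDLimit v s β ∧ (W : Set (RatFunc K)) = VESet v s}

/-- `𝒱_stat(•,δ)`: those `V_E` with `E` pseudo-stationary of breadth `δ`. -/
def VVstatδ (v : AddValuation K (WithTop ℝ)) (δ : WithTop ℝ) :
    Set (ValuationSubring (RatFunc K)) :=
  {W | ∃ s : ℕ → K, (∀ n m : ℕ, n ≠ m → v (s n - s m) = δ) ∧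
    (W : Set (RatFunc K)) = VESet v s}

/-- `𝒱_stat(β,•)`: those `V_E` with `E` pseudo-stationary having `β` as a pseudo-limit. -/
def VVstatβ (v : AddValuation K (WithTop ℝ)) (β : K) : Set (ValuationSubring (RatFunc K)) :=
  {W | ∃ (s : ℕ → K) (δ : WithTop ℝ), (∀ n m : ℕ, n ≠ m → v (s n - s m) = δ) ∧
    (∀ n, δ ≤ v (β - s n)) ∧ (W : Set (RatFunc K)) = VESet v s}

/-- The Zariski topology on the valuation subrings of a field `L`, generated by the
sets `B(φ) = {W : φ ∈ W}`. -/
def zarTop (L : Type*) [Field L] : TopologicalSpace (ValuationSubring L) :=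
  generateFrom {U | ∃ φ : L, U = {W : ValuationSubring L | φ ∈ W}}

/-- The constructible topology on the valuation subrings of a field `L`: the coarsest
topology in which all finite intersections `B(φ₁) ∩ ⋯ ∩ B(φ_k)` are open and closed. -/
def consTop (L : Type*) [Field L] : TopologicalSpace (ValuationSubring L) :=
  generateFrom {U | ∃ T : Finset L, U = {W : ValuationSubring L | ∀ φ ∈ T, φ ∈ W} ∨
    U = {W : ValuationSubring L | ∀ φ ∈ T, φ ∈ W}ᶜ}

/-- The subspace Zariski topology on a set of valuation subrings. -/
def zarSub {L : Type*} [Field L] (S : Set (ValuationSubring L)) : TopologicalSpace ↥S :=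
  (zarTop L).induced Subtype.val

/-- The subspace constructible topology on a set of valuation subrings. -/
def consSub {L : Type*} [Field L] (S : Set (ValuationSubring L)) : TopologicalSpace ↥S :=
  (consTop L).induced Subtype.val

/-- `d` is a metric on `X` inducing the topology `t`. -/
def MetrizedBy {X : Type*} (t : TopologicalSpace X) (d : X → X → ℝ) : Prop :=
  (∀ x y, d x y = d y x) ∧ (∀ x y, d x y = 0 ↔ x = y) ∧
  (∀ x y z, d x z ≤ d x y + d y z) ∧
  t = generateFrom {U : Set X | ∃ (x : X) (ε : ℝ), 0 < ε ∧ U = {y | d x y < ε}}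

/-- The topology `t` is metrizable. -/
def IsMetrizable {X : Type*} (t : TopologicalSpace X) : Prop := ∃ d, MetrizedBy t d

/-- The topology `t` is induced by an ultrametric. -/
def IsUltrametrizable {X : Type*} (t : TopologicalSpace X) : Prop :=
  ∃ d, MetrizedBy t d ∧ ∀ x y z, d x z ≤ max (d x y) (d y z)

/-- `dd` computes the distance `d_δ` on `𝒱(•,δ)`:
`d_δ(V_E, V_F) = lim_n max (d(s_n,t_n) - e^{-δ}) 0`. -/
def IsDistδ (v : AddValuation K (WithTop ℝ)) (δ : WithTop ℝ)
    (dd : ValuationSubring (RatFunc K) → ValuationSubring (RatFunc K) → ℝ) : Prop :=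
  ∀ (W W' : ValuationSubring (RatFunc K)) (s t : ℕ → K),
    IsPC v s → IsBreadth v s δ → (W : Set (RatFunc K)) = VESet v s →
    IsPC v t → IsBreadth v t δ → (W' : Set (RatFunc K)) = VESet v t →
    Tendsto (fun n => max (dK v (s n) (t n) - expNeg δ) 0) atTop (𝓝 (dd W W'))

/-- The `Λ`-upper limit topology on the interval `(-∞, b] ⊆ ℝ ∪ {∞}`, generated by the
half-open intervals `(α, λ]` with `λ ∈ Λ ∪ {∞}`. -/
def upperTopWT (b : WithTop ℝ) (Λ : Set ℝ) : TopologicalSpace {γ : WithTop ℝ // γ ≤ b} :=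
  generateFrom {U | ∃ α lam : WithTop ℝ, α ≤ b ∧
    (lam = ⊤ ∨ ∃ r ∈ Λ, lam = (r : WithTop ℝ)) ∧
    U = {γ : {γ : WithTop ℝ // γ ≤ b} | α < (γ : WithTop ℝ) ∧ (γ : WithTop ℝ) ≤ lam}}

/-- The `Λ`-upper limit topology on `(-∞, +∞] = ℝ ∪ {∞}`. -/
def upperTopAll (Λ : Set ℝ) : TopologicalSpace (WithTop ℝ) :=
  generateFrom {U | ∃ α lam : WithTop ℝ,
    (lam = ⊤ ∨ ∃ r ∈ Λ, lam = (r : WithTop ℝ)) ∧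
    U = {γ : WithTop ℝ | α < γ ∧ γ ≤ lam}}

/-- The `Λ`-upper limit topology on an interval `(a, b]` of `ℝ ∪ {±∞}`. -/
def upperTopE (a b : EReal) (Λ : Set ℝ) : TopologicalSpace {x : EReal // a < x ∧ x ≤ b} :=
  generateFrom {U | ∃ α lam : EReal, (a < α ∧ α ≤ b) ∧
    (lam = ⊤ ∨ ∃ r ∈ Λ, lam = (r : EReal)) ∧
    U = {x : {x : EReal // a < x ∧ x ≤ b} | α < (x : EReal) ∧ (x : EReal) ≤ lam}}


/-- `𝒲`: the valuation domains of the valuations `w_E : φ ↦ lim_n v(φ(s_n))`, as `E`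
ranges over the pseudo-convergent sequences for which `w_E` is a valuation. -/
def WW (v : AddValuation K (WithTop ℝ)) : Set (ValuationSubring (RatFunc K)) :=
  {W | ∃ (s : ℕ → K) (w : AddValuation (RatFunc K) (WithTop ℝ)), IsPC v s ∧
    (∀ φ : RatFunc K, OrdLim (fun n => v (RatFunc.eval (RingHom.id K) (s n) φ)) (w φ)) ∧
    (W : Set (RatFunc K)) = {φ : RatFunc K | 0 ≤ w φ}}

lemma coe_le_iff_sub_nonneg (a : WithTop ℝ) (r : ℝ) : (r : WithTop ℝ) ≤ a ↔ 0 ≤ a - r := by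
  induction a using WithTop.recTopCoe with
  | top => simp
  | coe q => norm_cast; exact sub_nonneg.symm

lemma expNeg_strictAnti : StrictAnti expNeg := by
  intro a b hab
  induction b using WithTop.recTopCoe with
  | top =>
    lift a to ℝ using hab.ne_top
    exact Real.exp_pos _
  | coe r =>
    lift a to ℝ using (hab.trans (WithTop.coe_lt_top r)).ne_top
    exact Real.exp_lt_exp.2 (neg_lt_neg (WithTop.coe_lt_coe.1 hab))

lemma expNeg_nonneg (γ : WithTop ℝ) : 0 ≤ expNeg γ := by
  induction γ using WithTop.recTopCoe with
  | top => exact le_rfl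
  | coe r => exact (Real.exp_pos _).le

lemma dK_le_max (v : AddValuation K (WithTop ℝ)) (x y z : K) :
    dK v x z ≤ max (dK v x y) (dK v y z) := by
  have h : min (v (x - y)) (v (y - z)) ≤ v (x - z) := by
    simpa using v.map_add (x - y) (y - z)
  rcases le_total (v (x - y)) (v (y - z)) with hle | hle
  · exact le_max_of_le_left (expNeg_strictAnti.antitone (by simpa [hle] using h))
  · exact le_max_of_le_right (expNeg_strictAnti.antitone (by simpa [hle] using h))

lemma tendsto_expNeg_of_ordLim {γ : ℕ → ℝ} {δ : WithTop ℝ} (hlt : ∀ n, (γ n : WithTop ℝ) < δ)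
    (hlim : ∀ a < δ, ∀ᶠ n in atTop, a < (γ n : WithTop ℝ)) :
    Tendsto (fun n => expNeg (γ n)) atTop (𝓝 (expNeg δ)) := by
  induction δ using WithTop.recTopCoe with
  | top =>
    have hγ : Tendsto γ atTop atTop := tendsto_atTop.2 fun b =>
      (hlim b (WithTop.coe_lt_top b)).mono fun n hn => (WithTop.coe_lt_coe.1 hn).le
    exact Real.tendsto_exp_neg_atTop_nhds_zero.comp hγ
  | coe D =>
    have hγ : Tendsto γ atTop (𝓝 D) := tendsto_order.2
      ⟨fun a ha => (hlim a (WithTop.coe_lt_coe.2 ha)).mono fun n hn => WithTop.coe_lt_coe.1 hn,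
        fun b hb => Eventually.of_forall fun n => (WithTop.coe_lt_coe.1 (hlt n)).trans hb⟩
    exact (Real.continuous_exp.tendsto _).comp hγ.neg

section PseudoConvergent

variable {F : Type*} [Field F] {w : AddValuation F (WithTop ℝ)} {s : ℕ → F} {δ : WithTop ℝ}

/-- The gap `γ_n = v(s_{n+1} - s_n)` as a real number (junk value `0` if `s_{n+1} = s_n`, which
never happens for pseudo-convergent `s`). -/
def gap (w : AddValuation F (WithTop ℝ)) (s : ℕ → F) (n : ℕ) : ℝ := (w (s (n + 1) - s n)).untopD 0

namespace IsPC

lemma valuation_succ_sub (hs : IsPC w s) (n : ℕ) : w (s (n + 1) - s n) = gap w s n := by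
  obtain ⟨r, hr⟩ := WithTop.ne_top_iff_exists.1 (hs n).ne_top
  simp [gap, ← hr]

lemma strictMono_gap (hs : IsPC w s) : StrictMono (gap w s) :=
  strictMono_nat_of_lt_succ fun n => by
    have := hs n
    rwa [hs.valuation_succ_sub, hs.valuation_succ_sub, WithTop.coe_lt_coe] at this

lemma valuation_sub (hs : IsPC w s) {n m : ℕ} (hnm : n < m) : w (s m - s n) = gap w s n := by
  induction m, hnm using Nat.le_induction with
  | base => exact hs.valuation_succ_sub n
  | succ m hnm ih =>
    rw [show s (m + 1) - s n = (s (m + 1) - s m) + (s m - s n) by ring,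
      AddValuation.map_add_eq_of_lt_right _ (by
        rw [ih, hs.valuation_succ_sub, WithTop.coe_lt_coe]; exact hs.strictMono_gap hnm), ih]

lemma pseudoLimit_or_eventually_const (hs : IsPC w s) (α : F) :
    (∀ n, w (s n - α) = gap w s n) ∨
      ∃ lam : ℝ, ∀ᶠ n in atTop, w (s n - α) = lam ∧ lam < gap w s n := by
  by_cases h : ∃ n, w (s n - α) < gap w s n
  · right
    obtain ⟨N, hN⟩ := h
    obtain ⟨lam, hlam⟩ := WithTop.ne_top_iff_exists.1 hN.ne_top
    refine ⟨lam, eventually_atTop.2 ⟨N, fun n hn => ?_⟩⟩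
    induction n, hn using Nat.le_induction with
    | base => exact ⟨hlam.symm, WithTop.coe_lt_coe.1 (hlam ▸ hN)⟩
    | succ n _ ih =>
      refine ⟨?_, ih.2.trans (hs.strictMono_gap n.lt_succ_self)⟩
      rw [show s (n + 1) - α = (s (n + 1) - s n) + (s n - α) by ring,
        AddValuation.map_add_eq_of_lt_right _ (by
          rw [ih.1, hs.valuation_succ_sub, WithTop.coe_lt_coe]; exact ih.2), ih.1]
  · left
    push Not at h
    intro n
    have hn : w (s n - s (n + 1)) = gap w s n := by rw [w.map_sub_swap, hs.valuation_succ_sub]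
    have hlt : w (s n - s (n + 1)) < w (s (n + 1) - α) :=
      hn ▸ (WithTop.coe_lt_coe.2 (hs.strictMono_gap n.lt_succ_self)).trans_le (h (n + 1))
    rw [show s n - α = (s n - s (n + 1)) + (s (n + 1) - α) by ring,
      AddValuation.map_add_eq_of_lt_left _ hlt, hn]

lemma gap_lt (hs : IsPC w s) (hb : IsBreadth w s δ) (n : ℕ) : (gap w s n : WithTop ℝ) < δ := by
  by_contra! h
  have hlt : δ < gap w s (n + 1) :=
    h.trans_lt (WithTop.coe_lt_coe.2 (hs.strictMono_gap n.lt_succ_self))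
  obtain ⟨m, hm, hnm⟩ := ((hb.2 _ hlt).and (eventually_ge_atTop (n + 1))).exists
  change w (s (m + 1) - s m) < _ at hm
  rw [hs.valuation_succ_sub m, WithTop.coe_lt_coe] at hm
  exact hm.not_ge (hs.strictMono_gap.monotone hnm)

lemma eventually_lt_gap (hs : IsPC w s) (hb : IsBreadth w s δ) {a : WithTop ℝ} (ha : a < δ) :
    ∀ᶠ n in atTop, a < gap w s n :=
  (hb.1 a ha).mono fun n hn => hs.valuation_succ_sub n ▸ hn

lemma tendsto_expNeg_gap (hs : IsPC w s) (hb : IsBreadth w s δ) :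
    Tendsto (fun n => expNeg (gap w s n)) atTop (𝓝 (expNeg δ)) :=
  tendsto_expNeg_of_ordLim (hs.gap_lt hb) fun _ => hs.eventually_lt_gap hb

lemma le_valuation_sub_of_pseudoLimit (hs : IsPC w s) (hb : IsBreadth w s δ) {α β : F}
    (hα : ∀ n, w (s n - α) = gap w s n) (hβ : ∀ n, w (s n - β) = gap w s n) :
    δ ≤ w (α - β) := by
  by_contra! h
  obtain ⟨n, hn⟩ := (hs.eventually_lt_gap hb h).exists
  have := w.map_add (α - s n) (s n - β)
  rw [w.map_sub_swap, hα, hβ, min_self, sub_add_sub_cancel] at this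
  exact this.not_gt hn

lemma exists_eventually_valuation_sub_eq (hs : IsPC w s) (hb : IsBreadth w s δ) (α : F) :
    ∃ g : ℕ → ℝ, (∀ n, (g n : WithTop ℝ) < δ) ∧ ∀ᶠ n in atTop, w (s n - α) = g n := by
  rcases hs.pseudoLimit_or_eventually_const α with h | ⟨lam, h⟩
  · exact ⟨gap w s, hs.gap_lt hb, Eventually.of_forall h⟩
  · obtain ⟨n, -, hn⟩ := h.exists
    exact ⟨fun _ => lam, fun _ => (WithTop.coe_lt_coe.2 hn).trans (hs.gap_lt hb n),
      h.mono fun _ h => h.1⟩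

end IsPC

end PseudoConvergent

lemma exists_nonneg_add_mul_iff (δ : WithTop ℝ) (d m : ℝ) :
    ∃ θ : ℝ, (θ : WithTop ℝ) < δ ∧ ∃ b : Prop,
      ∀ μ : ℝ, θ < μ → (μ : WithTop ℝ) < δ → (0 ≤ d + m * μ ↔ b) := by
  induction δ using WithTop.recTopCoe with
  | top =>
    rcases lt_trichotomy m 0 with hm | rfl | hm
    · refine ⟨-d / m, WithTop.coe_lt_top _, False, fun μ hμ _ => iff_false_intro ?_⟩
      rw [div_lt_iff_of_neg hm] at hμ
      linarith
    · exact ⟨0, WithTop.coe_lt_top _, 0 ≤ d, fun μ _ _ => by simp⟩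
    · refine ⟨-d / m, WithTop.coe_lt_top _, True, fun μ hμ _ => iff_true_intro ?_⟩
      rw [div_lt_iff₀ hm] at hμ
      linarith
  | coe D =>
    have hcont : Continuous fun μ : ℝ => d + m * μ := by fun_prop
    obtain ⟨b, hb⟩ : ∃ b : Prop, ∀ᶠ μ in 𝓝[<] D, (0 ≤ d + m * μ ↔ b) := by
      rcases lt_trichotomy (d + m * D) 0 with hc | hc | hc
      · exact ⟨False, nhdsWithin_le_nhds ((hcont.tendsto D).eventually (gt_mem_nhds hc) |>.mono
          fun μ hμ => iff_false_intro hμ.not_ge)⟩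
      · refine ⟨m ≤ 0, eventually_nhdsWithin_of_forall fun μ (hμ : μ < D) => ?_⟩
        rw [show d + m * μ = -m * (D - μ) by linarith, mul_nonneg_iff_of_pos_right (sub_pos.2 hμ),
          neg_nonneg]
      · exact ⟨True, nhdsWithin_le_nhds ((hcont.tendsto D).eventually (lt_mem_nhds hc) |>.mono
          fun μ hμ => iff_true_intro hμ.le)⟩
    obtain ⟨θ, hθ, hsub⟩ := mem_nhdsLT_iff_exists_Ioo_subset.1 hb
    exact ⟨θ, WithTop.coe_lt_coe.2 hθ, b, fun μ h1 h2 => hsub ⟨h1, WithTop.coe_lt_coe.1 h2⟩⟩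

section PolynomialValuation

variable {F : Type*} [Field F] (w : AddValuation F (WithTop ℝ))

lemma valuation_eval_eq_of_splits {p : F[X]} (hp : p.Splits) (z : F) :
    w (p.eval z) = w p.leadingCoeff + (p.roots.map fun α => w (z - α)).sum := by
  have hprod : ∀ M : Multiset F,
      w (M.map fun α => z - α).prod = (M.map fun α => w (z - α)).sum := by
    intro M
    induction M using Multiset.induction_on with
    | empty => simp
    | cons a M ih => simp [w.map_mul, ih]
  conv_lhs => rw [hp.eq_prod_roots]
  simp [eval_multiset_prod, Multiset.map_map, hprod]

lemma eventually_sum_valuation_sub_eq {x : ℕ → F} {g : ℕ → ℝ} {A B : F → ℝ} (M : Multiset F)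
    (h : ∀ α ∈ M, ∀ᶠ n in atTop, w (x n - α) = ↑(A α + B α * g n)) :
    ∀ᶠ n in atTop, (M.map fun α => w (x n - α)).sum = ↑((M.map A).sum + (M.map B).sum * g n) := by
  induction M using Multiset.induction_on with
  | empty => simp
  | cons a M ih =>
    filter_upwards [h a (Multiset.mem_cons_self a M),
      ih fun α hα => h α (Multiset.mem_cons_of_mem hα)] with n ha hM
    simp only [Multiset.map_cons, Multiset.sum_cons, ha, hM, ← WithTop.coe_add]
    ring_nf

lemma eventually_valuation_eval_eq {p : F[X]} (hp : p.Splits) {x : ℕ → F} {g : ℕ → ℝ}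
    {A B : F → ℝ} (h : ∀ α ∈ p.roots, ∀ᶠ n in atTop, w (x n - α) = ↑(A α + B α * g n)) :
    ∀ᶠ n in atTop, w (p.eval (x n)) =
      w p.leadingCoeff + ↑((p.roots.map A).sum + (p.roots.map B).sum * g n) :=
  (eventually_sum_valuation_sub_eq w _ h).mono fun n hn => by
    rw [valuation_eval_eq_of_splits w hp, hn]

end PolynomialValuation

section Extension

variable {L : Type*} [Field L] [Algebra K L]

/-- Take `W` dominating the valuation ring of `v`; domination forces `W ∩ K` to be that ring. -/
lemma exists_valuationSubring_algebraMap_mem_iff (v : AddValuation K (WithTop ℝ)) :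
    ∃ W : ValuationSubring L, ∀ x : K, algebraMap K L x ∈ W ↔ 0 ≤ v x := by
  let f : v.valuationSubring →+* L := (algebraMap K L).comp v.valuationSubring.subtype
  obtain ⟨W, hW⟩ := (LocalSubring.range f).exists_le_valuationSubring
  obtain ⟨hle, hloc⟩ := LocalSubring.le_def.1 hW
  refine ⟨W, fun x => ⟨fun hx => ?_, fun hx => hle ⟨⟨x, hx⟩, rfl⟩⟩⟩
  by_contra! hneg
  have hx0 : x ≠ 0 := by rintro rfl; simp at hneg
  have hinv : 0 ≤ v x⁻¹ := by
    obtain ⟨r, hr⟩ := WithTop.ne_top_iff_exists.1 (v.ne_top_iff.2 hx0)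
    rw [AddValuation.map_inv, ← hr, ← WithTop.LinearOrderedAddCommGroup.coe_neg]
    rw [← hr] at hneg
    exact WithTop.coe_nonneg.2 (neg_nonneg.2 (WithTop.coe_lt_coe.1 hneg).le)
  let a : (LocalSubring.range f).toSubring := ⟨algebraMap K L x⁻¹, ⟨x⁻¹, hinv⟩, rfl⟩
  have ha : IsUnit (Subring.inclusion hle a) :=
    isUnit_iff_exists_inv.2 ⟨⟨algebraMap K L x, hx⟩, Subtype.ext <| by
      simp [a, inv_mul_cancel₀ ((_root_.map_ne_zero _).2 hx0)]⟩
  obtain ⟨b, hb⟩ := isUnit_iff_exists_inv.1 (hloc.map_nonunit a ha)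
  obtain ⟨y, hy⟩ := b.2
  have hxy : x⁻¹ * y = 1 := (algebraMap K L).injective <| by
    simpa [a, f, ← hy] using congrArg Subtype.val hb
  rw [inv_mul_eq_one₀ hx0] at hxy
  exact hneg.not_ge (hxy ▸ y.2)

variable {Γ₀ : Type*} [LinearOrderedCommGroupWithZero Γ₀]

lemma exists_lt_valuation_eq_of_sum_eq_zero {F ι : Type*} [Field F] [LinearOrder ι]
    (w : Valuation F Γ₀) {S : Finset ι} {f : ι → F} (hS : S.Nonempty) (hf : ∀ i ∈ S, f i ≠ 0)
    (hsum : ∑ i ∈ S, f i = 0) : ∃ i ∈ S, ∃ j ∈ S, i < j ∧ w (f i) = w (f j) := by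
  classical
  obtain ⟨i, hi, hmax⟩ := S.exists_max_image (fun i => w (f i)) hS
  obtain ⟨j, hj, hji, hij⟩ : ∃ j ∈ S, j ≠ i ∧ w (f j) = w (f i) := by
    by_contra! h
    have := w.map_sum_eq_of_lt hi fun j hj => by
      rw [Finset.mem_sdiff, Finset.mem_singleton] at hj
      exact (hmax j hj.1).lt_of_ne (h j hj.1 hj.2)
    rw [hsum, map_zero, eq_comm, Valuation.zero_iff] at this
    exact hf i hi this
  rcases hji.lt_or_gt with h | h
  · exact ⟨j, hj, i, hi, h, hij⟩
  · exact ⟨i, hi, j, hj, h, hij.symm⟩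

/-- Two terms `cᵢ xⁱ`, `cⱼ xʲ` of the relation `minpoly K x (x) = 0` have the same valuation, so
`w(x)^(j-i) = w(cᵢ/cⱼ)`. -/
lemma exists_pow_eq_valuation_algebraMap [FiniteDimensional K L] (w : Valuation L Γ₀) {x : L}
    (hx : x ≠ 0) :
    ∃ n, 0 < n ∧ n ≤ Module.finrank K L ∧ ∃ y : K, w x ^ n = w (algebraMap K L y) := by
  have hint : IsIntegral K x := IsIntegral.of_finite K x
  have hsum :
      ∑ i ∈ (minpoly K x).support, algebraMap K L ((minpoly K x).coeff i) * x ^ i = 0 := by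
    simpa [aeval_def, eval₂_eq_sum, Polynomial.sum_def] using minpoly.aeval K x
  have hterm : ∀ i ∈ (minpoly K x).support, algebraMap K L ((minpoly K x).coeff i) * x ^ i ≠ 0 :=
    fun i hi => mul_ne_zero ((_root_.map_ne_zero _).2 (mem_support_iff.1 hi)) (pow_ne_zero _ hx)
  obtain ⟨i, hi, j, hj, hij, hw⟩ := exists_lt_valuation_eq_of_sum_eq_zero w
    (support_nonempty.2 (minpoly.ne_zero hint)) hterm hsum
  refine ⟨j - i, Nat.sub_pos_of_lt hij,
    (Nat.sub_le _ _).trans ((le_natDegree_of_mem_supp j hj).trans (minpoly.natDegree_le x)),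
    (minpoly K x).coeff i / (minpoly K x).coeff j, ?_⟩
  have hcj : w (algebraMap K L ((minpoly K x).coeff j)) ≠ 0 :=
    (Valuation.ne_zero_iff w).2 ((_root_.map_ne_zero _).2 (mem_support_iff.1 hj))
  have hxi : w x ^ i ≠ 0 := pow_ne_zero _ ((Valuation.ne_zero_iff w).2 hx)
  have hpow : w x ^ j = w x ^ (j - i) * w x ^ i := by rw [← pow_add, Nat.sub_add_cancel hij.le]
  rw [map_mul, map_mul, w.map_pow, w.map_pow, hpow] at hw
  rw [map_div₀, map_div₀, eq_div_iff hcj]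
  exact mul_right_cancel₀ hxi (by rw [hw]; ac_rfl)

lemma exists_pow_factorial_eq_valuation_algebraMap [FiniteDimensional K L] (w : Valuation L Γ₀)
    (x : L) : ∃ y : K, w x ^ (Module.finrank K L).factorial = w (algebraMap K L y) := by
  rcases eq_or_ne x 0 with rfl | hx
  · exact ⟨0, by simp [Nat.factorial_ne_zero]⟩
  obtain ⟨n, hn, hnle, y, hy⟩ := exists_pow_eq_valuation_algebraMap (K := K) w hx
  obtain ⟨k, hk⟩ := Nat.dvd_factorial hn hnle
  exact ⟨y ^ k, by rw [hk, pow_mul, hy, map_pow, w.map_pow]⟩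


lemma le_iff_of_algebraMap_mem_iff (v : AddValuation K (WithTop ℝ)) {W : ValuationSubring L}
    (hW : ∀ x : K, algebraMap K L x ∈ W ↔ 0 ≤ v x) (x y : K) :
    W.valuation (algebraMap K L x) ≤ W.valuation (algebraMap K L y) ↔ v y ≤ v x := by
  rcases eq_or_ne y 0 with rfl | hy
  · simp
  obtain ⟨r, hr⟩ := WithTop.ne_top_iff_exists.1 (v.ne_top_iff.2 hy)
  rw [← div_le_one₀ ((Valuation.pos_iff _).2 ((_root_.map_ne_zero _).2 hy)), ← map_div₀,
    ← map_div₀, ValuationSubring.valuation_le_one_iff, hW, AddValuation.map_div, ← hr,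
    coe_le_iff_sub_nonneg]

/-- The extension is `x ↦ v(y) / N` where `w(x)^N = w(y)`. -/
lemma exists_addValuation_extension_of_pow_eq (v : AddValuation K (WithTop ℝ))
    (w : Valuation L Γ₀) (hw : ∀ x y : K, w (algebraMap K L x) ≤ w (algebraMap K L y) ↔ v y ≤ v x)
    {N : ℕ} (hN : N ≠ 0) (hpow : ∀ x : L, ∃ y : K, w x ^ N = w (algebraMap K L y)) :
    ∃ u : AddValuation L (WithTop ℝ), ∀ x : K, u (algebraMap K L x) = v x := by
  choose y hy using hpow
  have hle : ∀ x x' : L, w x ≤ w x' ↔ v (y x') ≤ v (y x) := fun x x' => by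
    rw [← hw, ← hy, ← hy, pow_le_pow_iff_left₀ zero_le zero_le hN]
  have heq : ∀ a b : K, w (algebraMap K L a) = w (algebraMap K L b) → v a = v b :=
    fun a b h => le_antisymm ((hw b a).1 h.ge) ((hw a b).1 h.le)
  let u : AddValuation L (WithTop ℝ) := AddValuation.of (fun x => v (y x))
    (by rw [heq _ 0 (by simp [← hy, zero_pow hN]), v.map_zero])
    (by rw [heq _ 1 (by simp [← hy]), v.map_one])
    (fun x x' => by
      rcases le_total (w x) (w x') with h | h
      · exact min_le_right _ _ |>.trans <| (hle _ _).1 <| (w.map_add x x').trans (max_eq_right h).le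
      · exact min_le_left _ _ |>.trans <| (hle _ _).1 <| (w.map_add x x').trans (max_eq_left h).le)
    (fun x x' => by
      rw [← v.map_mul]
      exact heq _ _ (by rw [← hy, map_mul, mul_pow, hy, hy, map_mul, Valuation.map_mul]))
  have hu : ∀ z : K, u (algebraMap K L z) = N • v z := fun z => by
    rw [← v.map_pow]
    exact heq _ _ (by rw [← hy, map_pow, map_pow])
  let f : WithTop ℝ →+ WithTop ℝ := (AddMonoidHom.mulLeft ((N : ℝ)⁻¹)).withTopMap
  have hf : Monotone f := Monotone.withTop_map fun a b hab =>
    mul_le_mul_of_nonneg_left hab (inv_nonneg.2 N.cast_nonneg)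
  refine ⟨u.map f rfl hf, fun z => ?_⟩
  change f (u (algebraMap K L z)) = v z
  rw [hu]
  induction v z using WithTop.recTopCoe with
  | top =>
    obtain ⟨n, rfl⟩ := Nat.exists_eq_succ_of_ne_zero hN
    rw [succ_nsmul, WithTop.add_top]
    rfl
  | coe r =>
    rw [← WithTop.coe_nsmul]
    change ((_ : ℝ) : WithTop ℝ) = r
    rw [WithTop.coe_inj, AddMonoidHom.coe_mulLeft, nsmul_eq_mul, inv_mul_cancel_left₀ (by simpa)]

end Extension

theorem exists_addValuation_extension (L : Type*) [Field L] [Algebra K L] [FiniteDimensional K L]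
    (v : AddValuation K (WithTop ℝ)) :
    ∃ u : AddValuation L (WithTop ℝ), ∀ x : K, u (algebraMap K L x) = v x := by
  obtain ⟨W, hW⟩ := exists_valuationSubring_algebraMap_mem_iff (L := L) v
  exact exists_addValuation_extension_of_pow_eq v W.valuation (le_iff_of_algebraMap_mem_iff v hW)
    (Nat.factorial_ne_zero _) (exists_pow_factorial_eq_valuation_algebraMap W.valuation)

section Lift

variable {L : Type*} [Field L] [Algebra K L] {v : AddValuation K (WithTop ℝ)}
  {u : AddValuation L (WithTop ℝ)} {s : ℕ → K} {δ : WithTop ℝ}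

lemma valuation_algebraMap_sub (hu : ∀ x, u (algebraMap K L x) = v x) (x y : K) :
    u (algebraMap K L x - algebraMap K L y) = v (x - y) := by
  rw [← map_sub, hu]

lemma IsPC.map (hu : ∀ x, u (algebraMap K L x) = v x) (hs : IsPC v s) :
    IsPC u (algebraMap K L ∘ s) := fun n => by
  simpa only [Function.comp_apply, valuation_algebraMap_sub hu] using hs n

lemma IsBreadth.map (hu : ∀ x, u (algebraMap K L x) = v x) (hb : IsBreadth v s δ) :
    IsBreadth u (algebraMap K L ∘ s) δ := by
  simpa only [IsBreadth, Function.comp_apply, valuation_algebraMap_sub hu] using hb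

end Lift

lemma mem_VESet_iff_of_eventually_eq (v : AddValuation K (WithTop ℝ)) {φ : RatFunc K}
    {t : ℕ → K} {a b : ℕ → ℝ} (ha : ∀ᶠ n in atTop, v (φ.num.eval (t n)) = a n)
    (hb : ∀ᶠ n in atTop, v (φ.denom.eval (t n)) = b n) :
    φ ∈ VESet v t ↔ ∀ᶠ n in atTop, b n ≤ a n := by
  refine eventually_congr ?_
  filter_upwards [ha, hb] with n ha hb
  have heval : RatFunc.eval (RingHom.id K) (t n) φ = φ.num.eval (t n) / φ.denom.eval (t n) := by
    rw [RatFunc.eval]; rfl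
  rw [heval, AddValuation.map_div, ha, hb, ← WithTop.LinearOrderedAddCommGroup.coe_sub,
    WithTop.coe_nonneg, sub_nonneg]

lemma exists_mem_VESet_iff_eventually_nonneg {L : Type*} [Field L] [Algebra K L]
    {v : AddValuation K (WithTop ℝ)} {u : AddValuation L (WithTop ℝ)}
    (hu : ∀ x, u (algebraMap K L x) = v x) {φ : RatFunc K} (hφ : φ ≠ 0)
    (hnum : (φ.num.map (algebraMap K L)).Splits) (hden : (φ.denom.map (algebraMap K L)).Splits)
    (A B : L → ℝ) :
    ∃ d m : ℝ, ∀ (t : ℕ → K) (g : ℕ → ℝ),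
      (∀ α ∈ (φ.num.map (algebraMap K L)).roots + (φ.denom.map (algebraMap K L)).roots,
        ∀ᶠ n in atTop, u (algebraMap K L (t n) - α) = ↑(A α + B α * g n)) →
      (φ ∈ VESet v t ↔ ∀ᶠ n in atTop, 0 ≤ d + m * g n) := by
  have hlead : ∀ p : K[X], p ≠ 0 → ∃ c : ℝ, u (p.map (algebraMap K L)).leadingCoeff = c :=
    fun p hp => WithTop.ne_top_iff_exists.1 (u.ne_top_iff.2 (by simpa using hp)) |>.imp
      fun _ h => h.symm
  obtain ⟨cf, hcf⟩ := hlead _ (RatFunc.num_ne_zero hφ)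
  obtain ⟨cg, hcg⟩ := hlead _ φ.denom_ne_zero
  set Rf := (φ.num.map (algebraMap K L)).roots
  set Rg := (φ.denom.map (algebraMap K L)).roots
  refine ⟨cf + (Rf.map A).sum - (cg + (Rg.map A).sum), (Rf.map B).sum - (Rg.map B).sum,
    fun t g h => ?_⟩
  have heval : ∀ (p : K[X]) (n : ℕ),
      v (p.eval (t n)) = u ((p.map (algebraMap K L)).eval (algebraMap K L (t n))) := by
    intro p n
    rw [eval_map, eval₂_at_apply, hu]
  rw [mem_VESet_iff_of_eventually_eq v
    (a := fun n => cf + (Rf.map A).sum + (Rf.map B).sum * g n)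
    (b := fun n => cg + (Rg.map A).sum + (Rg.map B).sum * g n)]
  · exact eventually_congr (Eventually.of_forall fun n => by constructor <;> intro <;> linarith)
  · filter_upwards [eventually_valuation_eval_eq u hnum
      fun α hα => h α (Multiset.mem_add.2 (Or.inl hα))] with n hn
    rw [heval, hn, hcf, ← WithTop.coe_add, add_assoc]
  · filter_upwards [eventually_valuation_eval_eq u hden
      fun α hα => h α (Multiset.mem_add.2 (Or.inr hα))] with n hn
    rw [heval, hn, hcg, ← WithTop.coe_add, add_assoc]

lemma exists_coe_lt_forall_le {ι : Type*} (S : Finset ι) (f : ι → ℝ) {δ : WithTop ℝ} {r : ℝ}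
    (hr : (r : WithTop ℝ) < δ) (hf : ∀ i ∈ S, (f i : WithTop ℝ) < δ) :
    ∃ ρ : ℝ, (ρ : WithTop ℝ) < δ ∧ ∀ i ∈ S, f i ≤ ρ := by
  classical
  induction S using Finset.induction_on with
  | empty => exact ⟨r, hr, by simp⟩
  | insert i S _ ih =>
    obtain ⟨ρ, hρ, hle⟩ := ih fun j hj => hf j (Finset.mem_insert_of_mem hj)
    refine ⟨max (f i) ρ, ?_, ?_⟩
    · rw [WithTop.coe_max]; exact max_lt (hf i (Finset.mem_insert_self i S)) hρ
    · simp only [Finset.mem_insert, forall_eq_or_imp]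
      exact ⟨le_max_left _ _, fun j hj => (hle j hj).trans (le_max_right _ _)⟩

section Profile

variable {L : Type*} [Field L] {u : AddValuation L (WithTop ℝ)} {δ : WithTop ℝ}

lemma eventually_valuation_sub_eq_of_close {a c : ℕ → L} {α : L} {lam ρ : ℝ}
    (hα : ∀ᶠ n in atTop, u (a n - α) = lam) (hlam : lam ≤ ρ)
    (hclose : ∀ᶠ n in atTop, (ρ : WithTop ℝ) < u (a n - c n)) :
    ∀ᶠ n in atTop, u (c n - α) = lam := by
  filter_upwards [hα, hclose] with n hα hclose
  rw [show c n - α = (c n - a n) + (a n - α) by ring,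
    AddValuation.map_add_eq_of_lt_right _ (by
      rw [hα, u.map_sub_swap]; exact (WithTop.coe_le_coe.2 hlam).trans_lt hclose), hα]

/-- Points at eventually constant distance from `a` keep that distance from any `c` close to
`a`, and all pseudo-limits of `a` share one distance `g_n` to `c_n`. -/
lemma exists_eventually_valuation_sub_eq_affine {a : ℕ → L} (ha : IsPC u a)
    (hab : IsBreadth u a δ) (M : Multiset L) :
    ∃ (A B : L → ℝ) (ρ₀ : ℝ), (ρ₀ : WithTop ℝ) < δ ∧ ∀ ρ : ℝ, ρ₀ ≤ ρ → (ρ : WithTop ℝ) < δ →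
      ∀ c : ℕ → L, IsPC u c → IsBreadth u c δ → (∀ᶠ n in atTop, (ρ : WithTop ℝ) < u (a n - c n)) →
      ∃ g : ℕ → ℝ, (∀ᶠ n in atTop, ρ < g n ∧ (g n : WithTop ℝ) < δ) ∧
        ∀ α ∈ M, ∀ᶠ n in atTop, u (c n - α) = ↑(A α + B α * g n) := by
  classical
  let IsLim : L → Prop := fun α => ∀ n, u (a n - α) = gap u a n
  have hstab : ∀ α, ¬ IsLim α → ∃ lam : ℝ, ∀ᶠ n in atTop, u (a n - α) = lam ∧ lam < gap u a n :=
    fun α h => (ha.pseudoLimit_or_eventually_const α).resolve_left h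
  choose! lam hlam using hstab
  obtain ⟨ρ₀, hρ₀, hρ₀le⟩ := exists_coe_lt_forall_le (M.toFinset.filter (¬ IsLim ·)) lam
    (ha.gap_lt hab 0) fun α hα => by
      obtain ⟨n, hn⟩ := (hlam α (Finset.mem_filter.1 hα).2).exists
      exact (WithTop.coe_lt_coe.2 hn.2).trans (ha.gap_lt hab n)
  refine ⟨fun α => if IsLim α then 0 else lam α, fun α => if IsLim α then 1 else 0, ρ₀, hρ₀,
    fun ρ hρ hρδ c hc hcb hclose => ?_⟩
  obtain ⟨g, hg, hlim⟩ : ∃ g : ℕ → ℝ, (∀ᶠ n in atTop, ρ < g n ∧ (g n : WithTop ℝ) < δ) ∧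
      ∀ β ∈ M, IsLim β → ∀ᶠ n in atTop, u (c n - β) = g n := by
    by_cases h : ∃ β₀ ∈ M, IsLim β₀
    · obtain ⟨β₀, -, hβ₀⟩ := h
      obtain ⟨g, hgδ, hg⟩ := hc.exists_eventually_valuation_sub_eq hcb β₀
      refine ⟨g, ?_, fun β _ hβ => ?_⟩
      · filter_upwards [hg, hclose, ha.eventually_lt_gap hab hρδ] with n hgn hca hgap
        refine ⟨WithTop.coe_lt_coe.1 ?_, hgδ n⟩
        rw [← hgn, show c n - β₀ = (c n - a n) + (a n - β₀) by ring]
        exact u.map_lt_add (by rwa [u.map_sub_swap]) (hβ₀ n ▸ hgap)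
      · have hδ := ha.le_valuation_sub_of_pseudoLimit hab hβ₀ hβ
        filter_upwards [hg] with n hn
        rw [show c n - β = (c n - β₀) + (β₀ - β) by ring,
          AddValuation.map_add_eq_of_lt_left _ (hn ▸ (hgδ n).trans_le hδ), hn]
    · push Not at h
      exact ⟨gap u c, (hc.eventually_lt_gap hcb hρδ).mono fun n hn =>
        ⟨WithTop.coe_lt_coe.1 hn, hc.gap_lt hcb n⟩, fun β hβ hl => absurd hl (h β hβ)⟩
  refine ⟨g, hg, fun α hα => ?_⟩
  by_cases h : IsLim α
  · filter_upwards [hlim α hα h] with n hn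
    simp [h, hn]
  · filter_upwards [eventually_valuation_sub_eq_of_close ((hlam α h).mono fun _ h => h.1)
      ((hρ₀le α (Finset.mem_filter.2 ⟨Multiset.mem_toFinset.2 hα, h⟩)).trans hρ) hclose] with n hn
    simp [h, hn]

end Profile

lemma exists_forall_mem_VESet_iff (v : AddValuation K (WithTop ℝ)) (φ : RatFunc K) {s : ℕ → K}
    {δ : WithTop ℝ} (hs : IsPC v s) (hb : IsBreadth v s δ) :
    ∃ ρ : ℝ, (ρ : WithTop ℝ) < δ ∧ ∀ t : ℕ → K, IsPC v t → IsBreadth v t δ →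
      (∀ᶠ n in atTop, (ρ : WithTop ℝ) < v (s n - t n)) → (φ ∈ VESet v t ↔ φ ∈ VESet v s) := by
  rcases eq_or_ne φ 0 with rfl | hφ
  · refine ⟨gap v s 0, hs.gap_lt hb 0, fun t _ _ _ => iff_of_true ?_ ?_⟩ <;>
      exact Eventually.of_forall fun n => by simp
  let L := SplittingField (φ.num * φ.denom)
  have hsplit : ∀ p : K[X], p ∣ φ.num * φ.denom → (p.map (algebraMap K L)).Splits := fun p hp =>
    (SplittingField.splits _).of_dvd
      ((Polynomial.map_ne_zero_iff (algebraMap K L).injective).2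
        (mul_ne_zero (RatFunc.num_ne_zero hφ) φ.denom_ne_zero))
      (Polynomial.map_dvd _ hp)
  obtain ⟨u, hu⟩ := exists_addValuation_extension L v
  obtain ⟨A, B, ρ₀, hρ₀, hprofile⟩ := exists_eventually_valuation_sub_eq_affine (hs.map hu)
    (hb.map hu) ((φ.num.map (algebraMap K L)).roots + (φ.denom.map (algebraMap K L)).roots)
  obtain ⟨d, m, hdm⟩ := exists_mem_VESet_iff_eventually_nonneg hu hφ
    (hsplit _ (dvd_mul_right _ _)) (hsplit _ (dvd_mul_left _ _)) A B
  obtain ⟨θ, hθ, b, hθb⟩ := exists_nonneg_add_mul_iff δ d m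
  have hρ : ((max ρ₀ θ : ℝ) : WithTop ℝ) < δ := by rw [WithTop.coe_max]; exact max_lt hρ₀ hθ
  have key : ∀ t : ℕ → K, IsPC v t → IsBreadth v t δ →
      (∀ᶠ n in atTop, ((max ρ₀ θ : ℝ) : WithTop ℝ) < v (s n - t n)) → (φ ∈ VESet v t ↔ b) := by
    intro t ht htb hclose
    obtain ⟨g, hg, hgM⟩ := hprofile _ (le_max_left _ _) hρ _ (ht.map hu) (htb.map hu)
      (hclose.mono fun n hn => by
        rwa [Function.comp_apply, Function.comp_apply, valuation_algebraMap_sub hu])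
    have hgb : ∀ᶠ n in atTop, (0 ≤ d + m * g n ↔ b) :=
      hg.mono fun n hn => hθb _ ((le_max_right _ _).trans_lt hn.1) hn.2
    rw [hdm t g hgM]
    exact ⟨fun h => (h.and hgb).exists.elim fun _ hn => hn.2.1 hn.1,
      fun hb => hgb.mono fun _ hn => hn.2 hb⟩
  exact ⟨max ρ₀ θ, hρ, fun t ht htb hclose =>
    (key t ht htb hclose).trans (key s hs hb (Eventually.of_forall fun n => by simp)).symm⟩

section Distance

variable {v : AddValuation K (WithTop ℝ)} {δ : WithTop ℝ}

/-- `d_δ(V_E, V_F)` is the limit of `distApprox v δ s t`. -/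
def distApprox (v : AddValuation K (WithTop ℝ)) (δ : WithTop ℝ) (s t : ℕ → K) (n : ℕ) : ℝ :=
  max (dK v (s n) (t n) - expNeg δ) 0

lemma distApprox_le_max (s t r : ℕ → K) (n : ℕ) :
    distApprox v δ s r n ≤ max (distApprox v δ s t n) (distApprox v δ t r n) := by
  unfold distApprox
  rcases le_max_iff.1 (dK_le_max v (s n) (t n) (r n)) with h | h
  · exact max_le (le_max_of_le_left (le_max_of_le_left (by linarith)))
      (le_max_of_le_left (le_max_right _ _))
  · exact max_le (le_max_of_le_right (le_max_of_le_left (by linarith)))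
      (le_max_of_le_left (le_max_right _ _))

variable {s t : ℕ → K} {x : ℝ}

lemma le_of_tendsto_distApprox (h : Tendsto (distApprox v δ s t) atTop (𝓝 x)) {γ : WithTop ℝ}
    (hγ : γ ≤ δ) (hst : ∀ᶠ n in atTop, γ ≤ v (s n - t n)) : x ≤ expNeg γ - expNeg δ :=
  le_of_tendsto h <| hst.mono fun _ hn => max_le
    (sub_le_sub_right (expNeg_strictAnti.antitone hn) _)
    (sub_nonneg.2 (expNeg_strictAnti.antitone hγ))

lemma eventually_lt_of_tendsto_distApprox (h : Tendsto (distApprox v δ s t) atTop (𝓝 x))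
    {γ : WithTop ℝ} (hx : x < expNeg γ - expNeg δ) : ∀ᶠ n in atTop, γ < v (s n - t n) :=
  (h.eventually_lt_const hx).mono fun n hn =>
    expNeg_strictAnti.lt_iff_gt.1 <| by
      have := (le_max_left (dK v (s n) (t n) - expNeg δ) 0).trans_lt hn
      rw [dK] at this
      linarith

lemma eq_zero_of_tendsto_distApprox_self (h : Tendsto (distApprox v δ s s) atTop (𝓝 x)) :
    x = 0 := by
  have hzero : distApprox v δ s s = fun _ => 0 := funext fun n => by
    rw [distApprox, dK, sub_self, AddValuation.map_zero]
    exact max_eq_right (by linarith [expNeg_nonneg δ, show expNeg ⊤ = 0 from rfl])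
  rw [hzero] at h
  exact tendsto_nhds_unique h tendsto_const_nhds

end Distance

lemma mem_VESet_linear_iff (v : AddValuation K (WithTop ℝ)) (t : ℕ → K) {a c : K} (hc : c ≠ 0) :
    algebraMap K[X] (RatFunc K) (C c⁻¹ * (X - C a)) ∈ VESet v t ↔
      ∀ᶠ n in atTop, v c ≤ v (t n - a) := by
  refine eventually_congr (Eventually.of_forall fun n => ?_)
  obtain ⟨r, hr⟩ := WithTop.ne_top_iff_exists.1 (v.ne_top_iff.2 hc)
  rw [RatFunc.eval_algebraMap]
  simp only [Algebra.algebraMap_self, RingHom.id_apply, eval₂_mul, eval₂_C, eval₂_sub, eval₂_X]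
  rw [inv_mul_eq_div, AddValuation.map_div, ← hr, coe_le_iff_sub_nonneg]

lemma mem_iff_mem_VESet {v : AddValuation K (WithTop ℝ)} {W : ValuationSubring (RatFunc K)}
    {s : ℕ → K} (hW : (W : Set (RatFunc K)) = VESet v s) (φ : RatFunc K) : φ ∈ W ↔ φ ∈ VESet v s := by
  rw [← SetLike.mem_coe, hW]

namespace IsDistδ

variable {v : AddValuation K (WithTop ℝ)} {δ : WithTop ℝ}
  {dd : ValuationSubring (RatFunc K) → ValuationSubring (RatFunc K) → ℝ}

lemma self_eq_zero (hdd : IsDistδ v δ dd) (W : VVδ v δ) : dd W W = 0 := by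
  obtain ⟨s, hs, hb, hW⟩ := W.2
  exact eq_zero_of_tendsto_distApprox_self (hdd _ _ _ _ hs hb hW hs hb hW)

lemma le_max (hdd : IsDistδ v δ dd) (W₁ W₂ W₃ : VVδ v δ) :
    dd W₁ W₃ ≤ max (dd W₁ W₂) (dd W₂ W₃) := by
  obtain ⟨s₁, hs₁, hb₁, hW₁⟩ := W₁.2
  obtain ⟨s₂, hs₂, hb₂, hW₂⟩ := W₂.2
  obtain ⟨s₃, hs₃, hb₃, hW₃⟩ := W₃.2
  exact le_of_tendsto_of_tendsto' (hdd _ _ _ _ hs₁ hb₁ hW₁ hs₃ hb₃ hW₃)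
    ((hdd _ _ _ _ hs₁ hb₁ hW₁ hs₂ hb₂ hW₂).max (hdd _ _ _ _ hs₂ hb₂ hW₂ hs₃ hb₃ hW₃))
    (distApprox_le_max s₁ s₂ s₃)

lemma exists_forall_mem_iff (hdd : IsDistδ v δ dd) (φ : RatFunc K) (W₀ : VVδ v δ) :
    ∃ ε > 0, ∀ W : VVδ v δ, dd W₀ W < ε → (φ ∈ W.1 ↔ φ ∈ W₀.1) := by
  obtain ⟨s, hs, hb, hW₀⟩ := W₀.2
  obtain ⟨ρ, hρ, hφ⟩ := exists_forall_mem_VESet_iff v φ hs hb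
  refine ⟨expNeg ρ - expNeg δ, sub_pos.2 (expNeg_strictAnti hρ), fun W hW => ?_⟩
  obtain ⟨t, ht, htb, hWt⟩ := W.2
  rw [mem_iff_mem_VESet hWt, mem_iff_mem_VESet hW₀]
  exact hφ t ht htb (eventually_lt_of_tendsto_distApprox (hdd _ _ _ _ hs hb hW₀ ht htb hWt) hW)

lemma exists_mem_forall_lt (hdd : IsDistδ v δ dd) (W : VVδ v δ) {r : ℝ} (hr : 0 < r) :
    ∃ ψ : RatFunc K, ψ ∈ W.1 ∧ ∀ W' : VVδ v δ, ψ ∈ W'.1 → dd W W' < r := by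
  obtain ⟨s, hs, hb, hW⟩ := W.2
  have hsmall : ∀ᶠ M in atTop, expNeg (gap v s M) - expNeg δ < r := by
    have h := (hs.tendsto_expNeg_gap hb).sub_const (expNeg δ)
    rw [sub_self] at h
    exact h.eventually_lt_const hr
  obtain ⟨M, hM⟩ := hsmall.exists
  have hc : s (M + 1) - s M ≠ 0 := fun h => by
    simpa [h] using hs.valuation_succ_sub M
  have hvc : v (s (M + 1) - s M) = gap v s M := hs.valuation_succ_sub M
  refine ⟨algebraMap K[X] (RatFunc K) (C (s (M + 1) - s M)⁻¹ * (X - C (s M))), ?_, fun W' hψ => ?_⟩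
  · rw [mem_iff_mem_VESet hW, mem_VESet_linear_iff v s hc]
    filter_upwards [eventually_gt_atTop M] with n hn
    rw [hvc, hs.valuation_sub hn]
  · obtain ⟨t, ht, htb, hWt⟩ := W'.2
    rw [mem_iff_mem_VESet hWt, mem_VESet_linear_iff v t hc, hvc] at hψ
    refine (le_of_tendsto_distApprox (hdd _ _ _ _ hs hb hW ht htb hWt) (hs.gap_lt hb M).le ?_
      ).trans_lt hM
    filter_upwards [hψ, eventually_gt_atTop M] with n htn hn
    rw [show s n - t n = (s n - s M) - (t n - s M) by ring]
    exact le_trans (le_min (hs.valuation_sub hn).ge htn) (v.map_sub _ _)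

end IsDistδ

lemma consTop_le_zarTop (L : Type*) [Field L] : consTop L ≤ zarTop L :=
  le_generateFrom fun _ ⟨φ, hU⟩ => isOpen_generateFrom_of_mem ⟨{φ}, Or.inl (by simp [hU])⟩

lemma le_consSub_of_isOpen {L : Type*} [Field L] {S : Set (ValuationSubring L)}
    (t : TopologicalSpace S)
    (h : ∀ φ : L, IsOpen[t] {W : S | φ ∈ W.1} ∧ IsOpen[t] {W : S | φ ∈ W.1}ᶜ) :
    t ≤ consSub S := by
  rw [consSub, consTop, induced_generateFrom_eq]
  refine le_generateFrom ?_
  rintro _ ⟨_, ⟨T, rfl | rfl⟩, rfl⟩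
  · have he : Subtype.val ⁻¹' {W : ValuationSubring L | ∀ φ ∈ T, φ ∈ W} =
        ⋂ φ ∈ T, {W : S | φ ∈ W.1} := by ext; simp
    rw [he]
    exact isOpen_biInter_finset fun φ _ => (h φ).1
  · have he : Subtype.val ⁻¹' {W : ValuationSubring L | ∀ φ ∈ T, φ ∈ W}ᶜ =
        ⋃ φ ∈ T, {W : S | φ ∈ W.1}ᶜ := by ext; simp
    rw [he]
    exact isOpen_biUnion fun φ _ => (h φ).2

def ballTop {X : Type*} (d : X → X → ℝ) : TopologicalSpace X :=
  generateFrom {U : Set X | ∃ (x : X) (ε : ℝ), 0 < ε ∧ U = {y | d x y < ε}}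

lemma isOpen_ballTop_of_forall_ball {X : Type*} {d : X → X → ℝ} (hd : ∀ x, d x x = 0) {U : Set X}
    (hU : ∀ x ∈ U, ∃ ε > 0, ∀ y, d x y < ε → y ∈ U) : IsOpen[ballTop d] U := by
  refine @isOpen_iff_forall_mem_open _ (ballTop d) _ |>.2 fun x hx => ?_
  obtain ⟨ε, hε, hball⟩ := hU x hx
  exact ⟨{y | d x y < ε}, hball, isOpen_generateFrom_of_mem ⟨x, ε, hε, rfl⟩,
    show d x x < ε by rw [hd]; exact hε⟩

lemma le_ballTop_of_forall_ball {X : Type*} (t : TopologicalSpace X) {d : X → X → ℝ}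
    (hd : ∀ x y z, d x z ≤ max (d x y) (d y z))
    (h : ∀ x ε, 0 < ε → ∃ U, IsOpen[t] U ∧ x ∈ U ∧ ∀ y ∈ U, d x y < ε) : t ≤ ballTop d := by
  refine le_generateFrom ?_
  rintro _ ⟨x, ε, hε, rfl⟩
  refine isOpen_iff_forall_mem_open.2 fun y hy => ?_
  obtain ⟨U, hU, hyU, hUball⟩ := h y ε hε
  exact ⟨U, fun z hz => (hd x y z).trans_lt (max_lt hy (hUball z hz)), hU, hyU⟩

theorem statement3_general (v : AddValuation K (WithTop ℝ))
    (δ : WithTop ℝ)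
    (dd : ValuationSubring (RatFunc K) → ValuationSubring (RatFunc K) → ℝ)
    (hdd : IsDistδ v δ dd) :
    zarSub (VVδ v δ) = consSub (VVδ v δ) ∧
    zarSub (VVδ v δ) = generateFrom
      {U : Set ↥(VVδ v δ) | ∃ (W : ↥(VVδ v δ)) (ε : ℝ), 0 < ε ∧
        U = {W' : ↥(VVδ v δ) |
          dd (W : ValuationSubring (RatFunc K)) (W' : ValuationSubring (RatFunc K)) < ε}} := by
  change _ ∧ _ = ballTop fun W W' : VVδ v δ => dd W W'
  have hzar : zarSub (VVδ v δ) ≤ ballTop fun W W' : VVδ v δ => dd W W' :=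
    le_ballTop_of_forall_ball _ hdd.le_max fun W ε hε => by
      obtain ⟨ψ, hψ, hball⟩ := hdd.exists_mem_forall_lt W hε
      exact ⟨{W' | ψ ∈ W'.1}, isOpen_induced (t := zarTop (RatFunc K)) (s := {W | ψ ∈ W})
        (isOpen_generateFrom_of_mem ⟨ψ, rfl⟩), hψ, hball⟩
  have hball : (ballTop fun W W' : VVδ v δ => dd W W') ≤ consSub (VVδ v δ) :=
    le_consSub_of_isOpen _ fun φ => by
      constructor <;> refine isOpen_ballTop_of_forall_ball hdd.self_eq_zero fun W hW => ?_ <;>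
        obtain ⟨ε, hε, hφ⟩ := hdd.exists_forall_mem_iff φ W
      · exact ⟨ε, hε, fun W' hW' => (hφ W' hW').2 hW⟩
      · exact ⟨ε, hε, fun W' hW' h => hW ((hφ W' hW').1 h)⟩
  have hcons : consSub (VVδ v δ) ≤ zarSub (VVδ v δ) := induced_mono (consTop_le_zarTop _)
  exact ⟨le_antisymm (hzar.trans hball) hcons, le_antisymm hzar (hball.trans hcons)⟩

/-- On `𝒱(•,δ)`, the Zariski topology, the constructible topology and
the metric topology induced by `d_δ` coincide. -/
theorem statement3 (v : AddValuation K (WithTop ℝ)) (hv : IsRankOne v)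
    (δ : WithTop ℝ)
    (dd : ValuationSubring (RatFunc K) → ValuationSubring (RatFunc K) → ℝ)
    (hdd : IsDistδ v δ dd) :
    zarSub (VVδ v δ) = consSub (VVδ v δ) ∧
    zarSub (VVδ v δ) = generateFrom
      {U : Set ↥(VVδ v δ) | ∃ (W : ↥(VVδ v δ)) (ε : ℝ), 0 < ε ∧
        U = {W' : ↥(VVδ v δ) |
          dd (W : ValuationSubring (RatFunc K)) (W' : ValuationSubring (RatFunc K)) < ε}} :=
  statement3_general v δ dd hdd

end PaperPCZar
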